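/- arXiv:1608.02664 — 4 statements merged into one kernel-verified Lean document; each statement's English description precedes it below -/
import Mathlib

section
/- If f₁ : c₁ → x and f₂ : c₂ → x are injections of finite sets with pullback p = {(a,b) : f₁(a) = f₂(b)}, then the pushout d = c₁ ⊔_p c₂ admits a unique injection h : d → x with h ∘ r_i = f_i, where r_i : c_i → d are the pushout maps. -/
/-! The universal property applied to `f₁, f₂` produces `h`. Applied with target `Prop`, it
shows that `r₁, r₂` are jointly surjective, since the indicator of `range r₁ ∪ range r₂` and the
constant `True` agree after composing with both maps. Injectivity of `h` then reduces to that of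
`f₁, f₂`, together with `r₁ a = r₂ b` whenever `f₁ a = f₂ b`. -/

open Function Set

theorem range_union_range_eq_univ_of_cancel {α β δ : Type*} {r₁ : α → δ} {r₂ : β → δ}
    (hcancel : ∀ g g' : δ → Prop, g ∘ r₁ = g' ∘ r₁ → g ∘ r₂ = g' ∘ r₂ → g = g') :
    range r₁ ∪ range r₂ = univ := by
  have hcover : (· ∈ range r₁ ∪ range r₂) = fun _ => True :=
    hcancel _ _ (funext fun a => by simp) (funext fun b => by simp)
  exact eq_univ_of_forall fun e => of_eq_true (congrFun hcover e)

theorem injective_of_injective_comp_of_range_union_eq_univ {α β γ δ : Type*}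
    {r₁ : α → δ} {r₂ : β → δ} {h : δ → γ}
    (hinj₁ : Injective (h ∘ r₁)) (hinj₂ : Injective (h ∘ r₂))
    (hglue : ∀ a b, h (r₁ a) = h (r₂ b) → r₁ a = r₂ b)
    (hcover : range r₁ ∪ range r₂ = univ) : Injective h := by
  have hmem (e : δ) : e ∈ range r₁ ∪ range r₂ := hcover ▸ mem_univ e
  intro e e' heq
  rcases hmem e with ⟨a, rfl⟩ | ⟨b, rfl⟩ <;> rcases hmem e' with ⟨a', rfl⟩ | ⟨b', rfl⟩
  · exact congrArg r₁ (hinj₁ heq)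
  · exact hglue a b' heq
  · exact (hglue a' b heq.symm).symm
  · exact congrArg r₂ (hinj₂ heq)

theorem stmt_4_general {c₁ c₂ x d : Type}
    (f₁ : c₁ → x) (f₂ : c₂ → x)
    (hf₁ : Function.Injective f₁) (hf₂ : Function.Injective f₂)
    (r₁ : c₁ → d) (r₂ : c₂ → d)
    (hcomm : ∀ q : {q : c₁ × c₂ // f₁ q.1 = f₂ q.2}, r₁ q.1.1 = r₂ q.1.2)
    -- `d` together with `r₁, r₂` is the pushout of `c₁ ← p → c₂` in Set:
    (hpo : ∀ (z : Type) (h₁ : c₁ → z) (h₂ : c₂ → z),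
      (∀ q : {q : c₁ × c₂ // f₁ q.1 = f₂ q.2}, h₁ q.1.1 = h₂ q.1.2) →
      ∃! h : d → z, h ∘ r₁ = h₁ ∧ h ∘ r₂ = h₂) :
    ∃! h : d → x, Function.Injective h ∧ h ∘ r₁ = f₁ ∧ h ∘ r₂ = f₂ := by
  obtain ⟨h, ⟨hh₁, hh₂⟩, huniq⟩ := hpo x f₁ f₂ fun q => q.2
  have hcover : range r₁ ∪ range r₂ = univ :=
    range_union_range_eq_univ_of_cancel fun g g' hg₁ hg₂ =>
      (hpo Prop (g ∘ r₁) (g ∘ r₂) fun q => congrArg g (hcomm q)).unique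
        ⟨rfl, rfl⟩ ⟨hg₁.symm, hg₂.symm⟩
  have hglue (a : c₁) (b : c₂) (hab : h (r₁ a) = h (r₂ b)) : r₁ a = r₂ b :=
    hcomm ⟨(a, b), (congrFun hh₁ a).symm.trans (hab.trans (congrFun hh₂ b))⟩
  have hinj : Injective h :=
    injective_of_injective_comp_of_range_union_eq_univ (hh₁ ▸ hf₁) (hh₂ ▸ hf₂) hglue hcover
  exact ⟨h, ⟨hinj, hh₁, hh₂⟩, fun h' hh' => huniq h' hh'.2⟩

/-- If `f₁ : c₁ → x` and `f₂ : c₂ → x` are injections of finite sets with pullback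
`p = {(a,b) | f₁ a = f₂ b}`, then the pushout `d = c₁ ⊔_p c₂` (characterized by its
universal property in Set, with structure maps `r₁, r₂`) admits a unique injection
`h : d → x` with `h ∘ rᵢ = fᵢ`. -/
theorem stmt_4 {c₁ c₂ x d : Type} [Finite c₁] [Finite c₂] [Finite x] [Finite d]
    (f₁ : c₁ → x) (f₂ : c₂ → x)
    (hf₁ : Function.Injective f₁) (hf₂ : Function.Injective f₂)
    (r₁ : c₁ → d) (r₂ : c₂ → d)
    (hcomm : ∀ q : {q : c₁ × c₂ // f₁ q.1 = f₂ q.2}, r₁ q.1.1 = r₂ q.1.2)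
    -- `d` together with `r₁, r₂` is the pushout of `c₁ ← p → c₂` in Set:
    (hpo : ∀ (z : Type) (h₁ : c₁ → z) (h₂ : c₂ → z),
      (∀ q : {q : c₁ × c₂ // f₁ q.1 = f₂ q.2}, h₁ q.1.1 = h₂ q.1.2) →
      ∃! h : d → z, h ∘ r₁ = h₁ ∧ h ∘ r₂ = h₂) :
    ∃! h : d → x, Function.Injective h ∧ h ∘ r₁ = f₁ ∧ h ∘ r₂ = f₂ :=
  stmt_4_general f₁ f₂ hf₁ hf₂ r₁ r₂ hcomm hpo
end

section
/- For finite sets c₁, c₂, there is a bijection, natural in the finite set x, between Inj(c₁,x) × Inj(c₂,x) and the disjoint union over isomorphism classes of finite sets d of (Inj(d,x) × PO_d(c₁,c₂))/Sym(d), where PO_d(c₁,c₂) is the set of pairs of injections g_i : c_i → d presenting d as a weak pushout of c₁ and c₂ over their pullback; moreover the bijection is equivariant for the right Sym(c₁) × Sym(c₂) action by precomposition. -/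
/-- The pullback of two injections `g₁ : c₁ ↪ d`, `g₂ : c₂ ↪ d`. -/
def Pb {c₁ c₂ d : Type*} (g₁ : c₁ ↪ d) (g₂ : c₂ ↪ d) : Type _ :=
  {q : c₁ × c₂ // g₁ q.1 = g₂ q.2}

/-- `(g₁, g₂)` presents `d` as a weak pushout of `c₁` and `c₂` over their pullback:
for every pullback square over the same span (injections `h₁ : c₁ ↪ z`, `h₂ : c₂ ↪ z`
commuting over the pullback of `(g₁,g₂)` and forming a pullback square), there is a
unique injection `d ↪ z` making everything commute. -/
def IsWeakPushoutPres {c₁ c₂ d : Type} (g₁ : c₁ ↪ d) (g₂ : c₂ ↪ d) : Prop :=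
  ∀ (z : Type) (h₁ : c₁ ↪ z) (h₂ : c₂ ↪ z),
    (∀ q : Pb g₁ g₂, h₁ q.1.1 = h₂ q.1.2) →
    (∀ (a : c₁) (b : c₂), h₁ a = h₂ b → ∃ q : Pb g₁ g₂, q.1.1 = a ∧ q.1.2 = b) →
    ∃! h : d ↪ z, h₁ = g₁.trans h ∧ h₂ = g₂.trans h

/-- `PO_d(c₁,c₂)` (for `d = Fin n`): pairs of injections presenting `d` as a weak
pushout of `c₁` and `c₂` over their pullback. -/
def PO (c₁ c₂ : Type) (n : ℕ) : Type :=
  {gg : (c₁ ↪ Fin n) × (c₂ ↪ Fin n) // IsWeakPushoutPres gg.1 gg.2}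

/-- The (diagonal) right action of `Sym(Fin n)` on `Inj(Fin n, x) × PO_{Fin n}(c₁,c₂)`:
precomposition on the first factor and postcomposition on the second. -/
def poRel (c₁ c₂ : Type) (x : Type) (n : ℕ) :
    ((Fin n ↪ x) × PO c₁ c₂ n) → ((Fin n ↪ x) × PO c₁ c₂ n) → Prop :=
  fun a b => ∃ σ : Equiv.Perm (Fin n),
    b.1 = σ.toEmbedding.trans a.1 ∧
    a.2.1.1 = b.2.1.1.trans σ.toEmbedding ∧
    a.2.1.2 = b.2.1.2.trans σ.toEmbedding

/-! A pair of injections `g₁ : c₁ ↪ d`, `g₂ : c₂ ↪ d` into a finite set `d` presents `d` as a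
weak pushout exactly when `g₁` and `g₂` are jointly surjective. So every pair `(f₁, f₂)` of
injections into `x` arises by composition from one, with `d` the joint image of `f₁` and `f₂`;
and two such factorizations `f ∘ gᵢ = f' ∘ gᵢ'` differ by the unique `σ : d ≃ d'` with
`f = f' ∘ σ`, since `f` and `f'` both have the joint image as their range. -/

open Function

section WeakPushout

variable {c₁ c₂ d : Type} {g₁ : c₁ ↪ d} {g₂ : c₂ ↪ d}

lemma sum_elim_eq_iff_of_pullback_square {z : Type} {h₁ : c₁ ↪ z} {h₂ : c₂ ↪ z}
    (hcomm : ∀ q : Pb g₁ g₂, h₁ q.1.1 = h₂ q.1.2)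
    (hpb : ∀ a b, h₁ a = h₂ b → ∃ q : Pb g₁ g₂, q.1.1 = a ∧ q.1.2 = b) (s t : c₁ ⊕ c₂) :
    Sum.elim g₁ g₂ s = Sum.elim g₁ g₂ t ↔ Sum.elim h₁ h₂ s = Sum.elim h₁ h₂ t := by
  have mixed : ∀ a b, g₁ a = g₂ b ↔ h₁ a = h₂ b := fun a b =>
    ⟨fun hab => hcomm ⟨(a, b), hab⟩, fun hab => by
      obtain ⟨⟨⟨a, b⟩, hq⟩, rfl, rfl⟩ := hpb a b hab
      exact hq⟩
  rcases s with a | b <;> rcases t with a' | b'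
  · simp only [Sum.elim_inl, g₁.injective.eq_iff, h₁.injective.eq_iff]
  · exact mixed a b'
  · simp only [Sum.elim_inl, Sum.elim_inr]
    rw [eq_comm, mixed, eq_comm]
  · simp only [Sum.elim_inr, g₂.injective.eq_iff, h₂.injective.eq_iff]

lemma trans_eq_and_trans_eq_iff_sum_elim {z : Type} (h : d ↪ z) (h₁ : c₁ ↪ z) (h₂ : c₂ ↪ z) :
    (h₁ = g₁.trans h ∧ h₂ = g₂.trans h) ↔ Sum.elim h₁ h₂ = h ∘ Sum.elim g₁ g₂ := by
  simp [DFunLike.ext_iff, funext_iff, Sum.forall]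

theorem isWeakPushoutPres_of_surjective (hs : Surjective (Sum.elim g₁ g₂)) :
    IsWeakPushoutPres g₁ g₂ := by
  intro z h₁ h₂ hcomm hpb
  have hker := sum_elim_eq_iff_of_pullback_square hcomm hpb
  let h : d → z := Sum.elim h₁ h₂ ∘ surjInv hs
  have hG : h ∘ Sum.elim g₁ g₂ = Sum.elim h₁ h₂ :=
    funext fun s => (hker _ s).1 (surjInv_eq hs _)
  have hinj : Injective h := fun y y' hyy' => by
    rw [← surjInv_eq hs y, ← surjInv_eq hs y']
    exact (hker _ _).2 hyy'
  refine ⟨⟨h, hinj⟩, (trans_eq_and_trans_eq_iff_sum_elim _ _ _).2 hG.symm, fun h' hh' => ?_⟩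
  replace hh' := ((trans_eq_and_trans_eq_iff_sum_elim _ _ _).1 hh').symm.trans hG.symm
  exact DFunLike.coe_injective (hs.injective_comp_right hh')

/-- Applying the weak pushout property to the corestrictions of `g₁, g₂` to their joint
image gives an injection of the finite set `d` into that image. -/
theorem surjective_of_isWeakPushoutPres [Finite d] (hp : IsWeakPushoutPres g₁ g₂) :
    Surjective (Sum.elim g₁ g₂) := by
  let R := Set.range (Sum.elim g₁ g₂)
  obtain ⟨h, -, -⟩ := hp R (g₁.codRestrict R fun a => ⟨.inl a, rfl⟩)
    (g₂.codRestrict R fun b => ⟨.inr b, rfl⟩) (fun q => Subtype.ext q.2)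
    (fun a b hab => ⟨⟨(a, b), congrArg Subtype.val hab⟩, rfl, rfl⟩)
  intro y
  obtain ⟨y', rfl⟩ :=
    Finite.surjective_of_injective (Subtype.val_injective.comp h.injective) y
  exact (h y').2

theorem isWeakPushoutPres_iff_surjective [Finite d] :
    IsWeakPushoutPres g₁ g₂ ↔ Surjective (Sum.elim g₁ g₂) :=
  ⟨surjective_of_isWeakPushoutPres, isWeakPushoutPres_of_surjective⟩

end WeakPushout

lemma Function.Embedding.exists_equiv_of_range_eq {α β x : Type} (f : α ↪ x) (f' : β ↪ x)
    (h : Set.range f = Set.range f') : ∃ σ : β ≃ α, f' = σ.toEmbedding.trans f :=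
  ⟨(Equiv.ofInjective f' f'.injective).trans
      ((Equiv.setCongr h.symm).trans (Equiv.ofInjective f f.injective).symm),
    DFunLike.ext _ _ fun b => by simp [Equiv.apply_ofInjective_symm]⟩

/-- `Fin n` enumerates the joint image of `f₁` and `f₂`. -/
lemma exists_factorization_sum_elim_surjective {c₁ c₂ x : Type} [Finite c₁] [Finite c₂]
    (f₁ : c₁ ↪ x) (f₂ : c₂ ↪ x) :
    ∃ (n : ℕ) (f : Fin n ↪ x) (g₁ : c₁ ↪ Fin n) (g₂ : c₂ ↪ Fin n),
      Surjective (Sum.elim g₁ g₂) ∧ g₁.trans f = f₁ ∧ g₂.trans f = f₂ := by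
  let R := Set.range (Sum.elim f₁ f₂)
  obtain ⟨n, ⟨e⟩⟩ := Finite.exists_equiv_fin R
  let g₁ := (f₁.codRestrict R fun a => ⟨.inl a, rfl⟩).trans e.toEmbedding
  let g₂ := (f₂.codRestrict R fun b => ⟨.inr b, rfl⟩).trans e.toEmbedding
  have hG : Sum.elim g₁ g₂ = e ∘ Set.rangeFactorization (Sum.elim f₁ f₂) := by
    ext (a | b) <;> rfl
  refine ⟨n, e.symm.toEmbedding.trans (.subtype _), g₁, g₂, ?_, ?_, ?_⟩
  · rw [hG]
    exact e.surjective.comp Set.rangeFactorization_surjective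
  all_goals ext; exact congrArg Subtype.val (e.symm_apply_apply _)

def poCompose (c₁ c₂ x : Type) : (Σ n : ℕ, Quot (poRel c₁ c₂ x n)) → (c₁ ↪ x) × (c₂ ↪ x)
  | ⟨_, q⟩ => q.lift (fun p => (p.2.1.1.trans p.1, p.2.1.2.trans p.1)) <| by
      rintro ⟨f, g⟩ ⟨f', g'⟩ ⟨σ, rfl, hg₁, hg₂⟩
      dsimp only at hg₁ hg₂
      rw [hg₁, hg₂]
      rfl

lemma range_poCompose {c₁ c₂ x : Type} {n : ℕ} (f : Fin n ↪ x) (g : PO c₁ c₂ n) :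
    Set.range (Sum.elim (poCompose c₁ c₂ x ⟨n, Quot.mk _ (f, g)⟩).1
      (poCompose c₁ c₂ x ⟨n, Quot.mk _ (f, g)⟩).2) = Set.range f := by
  rw [← (isWeakPushoutPres_iff_surjective.1 g.2).range_comp]
  congr 1
  ext (a | b) <;> rfl

lemma poCompose_injective (c₁ c₂ x : Type) : Injective (poCompose c₁ c₂ x) := by
  rintro ⟨n, q⟩ ⟨n', q'⟩ h
  induction q using Quot.ind with | _ p => ?_
  induction q' using Quot.ind with | _ p' => ?_
  obtain ⟨f, g⟩ := p
  obtain ⟨f', g'⟩ := p'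
  obtain ⟨σ, hσ⟩ := f.exists_equiv_of_range_eq f'
    (by rw [← range_poCompose f g, ← range_poCompose f' g', h])
  obtain rfl : n = n' := Fin.equiv_iff_eq.1 ⟨σ.symm⟩
  have cancel {c : Type} {k k' : c ↪ Fin n} (hk : k.trans f = k'.trans f') :
      k = k'.trans σ.toEmbedding :=
    DFunLike.ext _ _ fun a => f.injective (by simpa [hσ] using DFunLike.congr_fun hk a)
  obtain ⟨h₁, h₂⟩ := Prod.ext_iff.1 h
  exact congrArg (Sigma.mk n) (Quot.sound ⟨σ, hσ, cancel h₁, cancel h₂⟩)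

lemma poCompose_surjective (c₁ c₂ x : Type) [Finite c₁] [Finite c₂] :
    Surjective (poCompose c₁ c₂ x) := by
  rintro ⟨f₁, f₂⟩
  obtain ⟨n, f, g₁, g₂, hs, rfl, rfl⟩ := exists_factorization_sum_elim_surjective f₁ f₂
  exact ⟨⟨n, Quot.mk _ (f, ⟨(g₁, g₂), isWeakPushoutPres_iff_surjective.2 hs⟩)⟩, rfl⟩

/-- For finite sets `c₁, c₂` there is a bijection, natural in the set `x`, between
`Inj(c₁,x) × Inj(c₂,x)` and the disjoint union over isomorphism classes of finite sets
`d = Fin n` of `(Inj(d,x) × PO_d(c₁,c₂))/Sym(d)`, given by composition; moreover it is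
equivariant for the right `Sym(c₁) × Sym(c₂)`-action by precomposition. -/
theorem stmt_5 {c₁ c₂ : Type} [Finite c₁] [Finite c₂] :
    ∃ E : ∀ x : Type, (Σ n : ℕ, Quot (poRel c₁ c₂ x n)) ≃ ((c₁ ↪ x) × (c₂ ↪ x)),
      -- the bijection is given by composition:
      (∀ (x : Type) (n : ℕ) (f : Fin n ↪ x) (g : PO c₁ c₂ n),
        E x ⟨n, Quot.mk _ (f, g)⟩ = (g.1.1.trans f, g.1.2.trans f)) ∧
      -- naturality in `x` (with respect to injections `u : x ↪ x'`):
      (∀ (x x' : Type) (u : x ↪ x') (n : ℕ) (f : Fin n ↪ x) (g : PO c₁ c₂ n),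
        E x' ⟨n, Quot.mk _ (f.trans u, g)⟩ =
          ((E x ⟨n, Quot.mk _ (f, g)⟩).1.trans u,
           (E x ⟨n, Quot.mk _ (f, g)⟩).2.trans u)) ∧
      -- equivariance for the right `Sym(c₁) × Sym(c₂)`-action by precomposition:
      (∀ (x : Type) (τ₁ : Equiv.Perm c₁) (τ₂ : Equiv.Perm c₂) (n : ℕ)
          (f : Fin n ↪ x) (g g' : PO c₁ c₂ n),
        g'.1.1 = τ₁.toEmbedding.trans g.1.1 → g'.1.2 = τ₂.toEmbedding.trans g.1.2 →
        E x ⟨n, Quot.mk _ (f, g')⟩ =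
          (τ₁.toEmbedding.trans (E x ⟨n, Quot.mk _ (f, g)⟩).1,
           τ₂.toEmbedding.trans (E x ⟨n, Quot.mk _ (f, g)⟩).2)) := by
  let E x : (Σ n : ℕ, Quot (poRel c₁ c₂ x n)) ≃ ((c₁ ↪ x) × (c₂ ↪ x)) :=
    .ofBijective _ ⟨poCompose_injective c₁ c₂ x, poCompose_surjective c₁ c₂ x⟩
  have hE : ∀ x n (f : Fin n ↪ x) (g : PO c₁ c₂ n),
      E x ⟨n, Quot.mk _ (f, g)⟩ = (g.1.1.trans f, g.1.2.trans f) := fun _ _ _ _ => rfl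
  refine ⟨E, hE, fun _ _ _ _ _ _ => rfl, ?_⟩
  intro x τ₁ τ₂ n f g g' hg₁ hg₂
  rw [hE, hE, hg₁, hg₂]
  rfl
end

section
/- For σ ∈ S_n, the number of fixed points of the induced action of σ on the set of k-element subsets of Fin n equals Σ_μ Π_i C(X_i(σ), μ_i), where the sum ranges over cycle types μ = (μ₁,…,μ_k) with Σ i·μᵢ = k. -/
/-!
A `σ`-invariant set is a union of cycles of `σ`, so invariant `k`-sets correspond to sets of
cycles of total length `k`. Grouping these by the partition of `k` formed by their lengths, a
set of cycles with `μᵢ` cycles of length `i` for each `i` is an independent choice of `μᵢ` of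
the `X_i(σ)` cycles of length `i`, whence the product of binomial coefficients.
-/

/-- `X_i(σ)`: the number of `i`-cycles of `σ`, i.e. the number of orbits of `⟨σ⟩`
on `Fin n` of size `i`. -/
noncomputable def cycleCount (n i : ℕ) (σ : Equiv.Perm (Fin n)) : ℕ :=
  (Finset.univ.filter fun a : Fin n => Function.minimalPeriod σ a = i).card / i

open Finset Function

namespace Finpartition

variable {α : Type*} [DecidableEq α] {s : Finset α} (P : Finpartition s)

theorem card_biUnion_of_subset_parts {T : Finset (Finset α)} (hT : T ⊆ P.parts) :
    #(T.biUnion id) = ∑ t ∈ T, #t :=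
  card_biUnion fun _ ht _ hu => P.disjoint (hT ht) (hT hu)

theorem biUnion_filter_subset_eq {S : Finset α} (hSs : S ⊆ s) (hS : ∀ a ∈ S, P.part a ⊆ S) :
    {t ∈ P.parts | t ⊆ S}.biUnion id = S := by
  refine Subset.antisymm (by simp +contextual [subset_iff]) fun a ha => ?_
  exact mem_biUnion.2 ⟨P.part a, mem_filter.2 ⟨P.part_mem.2 (hSs ha), hS a ha⟩,
    P.mem_part_self.2 (hSs ha)⟩

theorem filter_subset_biUnion_eq {T : Finset (Finset α)} (hT : T ⊆ P.parts) :
    {t ∈ P.parts | t ⊆ T.biUnion id} = T := by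
  refine Subset.antisymm (fun t ht => ?_)
    fun t ht => mem_filter.2 ⟨hT ht, subset_biUnion_of_mem id ht⟩
  obtain ⟨htP, htT⟩ := mem_filter.1 ht
  obtain ⟨a, ha⟩ := P.nonempty_of_mem_parts htP
  obtain ⟨u, hu, hau⟩ := mem_biUnion.1 (htT ha)
  rwa [P.eq_of_mem_parts htP (hT hu) ha hau]

theorem part_subset_biUnion {T : Finset (Finset α)} (hT : T ⊆ P.parts) {a : α}
    (ha : a ∈ T.biUnion id) : P.part a ⊆ T.biUnion id := by
  obtain ⟨t, ht, hat⟩ := mem_biUnion.1 ha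
  rw [P.part_eq_of_mem (hT ht) hat]
  exact subset_biUnion_of_mem id ht

theorem card_filter_saturated (k : ℕ) :
    #{S ∈ s.powerset | #S = k ∧ ∀ a ∈ S, P.part a ⊆ S} =
      #{T ∈ P.parts.powerset | ∑ t ∈ T, #t = k} := by
  refine card_bij' (fun S _ => {t ∈ P.parts | t ⊆ S}) (fun T _ => T.biUnion id) ?_ ?_ ?_ ?_
  · intro S hS
    obtain ⟨hSs, hSk, hS⟩ := by simpa only [mem_filter, mem_powerset] using hS
    refine mem_filter.2 ⟨mem_powerset.2 (filter_subset _ _), ?_⟩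
    rw [← P.card_biUnion_of_subset_parts (filter_subset _ _), P.biUnion_filter_subset_eq hSs hS,
      hSk]
  · intro T hT
    obtain ⟨hT, hTk⟩ := by simpa only [mem_filter, mem_powerset] using hT
    refine mem_filter.2 ⟨mem_powerset.2 ?_, by rw [P.card_biUnion_of_subset_parts hT, hTk],
      fun _ => P.part_subset_biUnion hT⟩
    rw [← P.biUnion_parts]
    exact biUnion_subset_biUnion_of_subset_left _ hT
  · intro S hS
    obtain ⟨hSs, -, hS⟩ := by simpa only [mem_filter, mem_powerset] using hS
    exact P.biUnion_filter_subset_eq hSs hS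
  · intro T hT
    exact P.filter_subset_biUnion_eq (mem_powerset.1 (mem_filter.1 hT).1)

theorem card_filter_card_part_eq (i : ℕ) :
    #{a ∈ s | #(P.part a) = i} = #{t ∈ P.parts | #t = i} * i := by
  have hunion : {a ∈ s | #(P.part a) = i} = {t ∈ P.parts | #t = i}.biUnion id := by
    ext a
    simp only [mem_filter, mem_biUnion, id]
    constructor
    · rintro ⟨ha, rfl⟩
      exact ⟨P.part a, ⟨P.part_mem.2 ha, rfl⟩, P.mem_part_self.2 ha⟩
    · rintro ⟨t, ⟨ht, rfl⟩, hat⟩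
      exact ⟨P.le ht hat, by rw [P.part_eq_of_mem ht hat]⟩
  rw [hunion, P.card_biUnion_of_subset_parts (filter_subset _ _),
    sum_const_nat fun t ht => (mem_filter.1 ht).2]

end Finpartition

namespace Equiv.Perm

variable {α : Type*} [Fintype α] [DecidableEq α]

instance (σ : Perm α) : DecidableRel (SameCycle.setoid σ) :=
  inferInstanceAs (DecidableRel σ.SameCycle)

def cyclePartition (σ : Perm α) : Finpartition (univ : Finset α) :=
  Finpartition.ofSetoid (SameCycle.setoid σ)

theorem mem_part_cyclePartition {σ : Perm α} {a b : α} :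
    b ∈ σ.cyclePartition.part a ↔ σ.SameCycle a b :=
  Finpartition.mem_part_ofSetoid_iff_rel

theorem card_part_cyclePartition (σ : Perm α) (a : α) :
    #(σ.cyclePartition.part a) = minimalPeriod σ a := by
  classical
  rw [show minimalPeriod σ a = minimalPeriod (σ • ·) a from rfl, MulAction.minimalPeriod_eq_card,
    ← Set.toFinset_card]
  congr 1
  ext b
  simp only [mem_part_cyclePartition, Set.mem_toFinset, MulAction.mem_orbit_iff,
    Subgroup.exists_zpowers]
  exact Iff.rfl

theorem image_eq_self_iff_part_subset {σ : Perm α} {S : Finset α} :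
    S.image σ = S ↔ ∀ a ∈ S, σ.cyclePartition.part a ⊆ S := by
  simp only [subset_iff, mem_part_cyclePartition]
  constructor
  · intro hS a ha b hab
    obtain ⟨i, -, rfl⟩ := hab.exists_pow_eq'
    have hmaps : Set.MapsTo σ S S := fun x hx => hS ▸ mem_image_of_mem σ hx
    rw [← iterate_eq_pow]
    exact hmaps.iterate i ha
  · intro hS
    refine eq_of_subset_of_card_le (fun b hb => ?_) (card_image_of_injective _ σ.injective).ge
    obtain ⟨a, ha, rfl⟩ := mem_image.1 hb
    exact hS a ha (sameCycle_apply_right.2 (SameCycle.refl σ a))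

end Equiv.Perm

namespace Finset

variable {β γ : Type*}

theorem card_filter_powerset_sum_eq [DecidableEq β] (P : Finset β) (f : β → ℕ)
    (hf : ∀ b ∈ P, 0 < f b) (k : ℕ) :
    #{T ∈ P.powerset | ∑ b ∈ T, f b = k} =
      ∑ μ : k.Partition, #{T ∈ P.powerset | T.val.map f = μ.parts} := by
  rw [← card_biUnion fun μ _ ν _ hne => disjoint_filter.2 fun T _ hμ hν =>
    hne (Nat.Partition.ext (hμ.symm.trans hν))]
  congr 1
  ext T
  simp only [mem_filter, mem_powerset, mem_biUnion, mem_univ, true_and]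
  rw [sum_eq_multiset_sum]
  constructor
  · rintro ⟨hTP, hT⟩
    refine ⟨⟨T.val.map f, ?_, hT⟩, hTP, rfl⟩
    simp only [Multiset.mem_map, mem_val]
    rintro _ ⟨b, hb, rfl⟩
    exact hf b (hTP hb)
  · rintro ⟨μ, hTP, hμ⟩
    exact ⟨hTP, hμ ▸ μ.parts_sum⟩

variable [DecidableEq γ]

theorem count_val_map (T : Finset β) (f : β → γ) (i : γ) :
    (T.val.map f).count i = #{b ∈ T | f b = i} := by
  rw [Multiset.count_map, card_def, filter_val]
  simp_rw [eq_comm]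

theorem val_map_eq_iff (T : Finset β) (f : β → γ) (m : Multiset γ) :
    T.val.map f = m ↔ (∀ b ∈ T, f b ∈ m) ∧ ∀ i ∈ m, #{b ∈ T | f b = i} = m.count i := by
  simp_rw [← count_val_map]
  refine ⟨fun h => ⟨fun b hb => h ▸ Multiset.mem_map_of_mem f hb, fun i _ => h ▸ rfl⟩,
    fun ⟨hT, hm⟩ => Multiset.ext.2 fun i => ?_⟩
  by_cases hi : i ∈ m
  · exact hm i hi
  · rw [Multiset.count_eq_zero.2 hi, Multiset.count_eq_zero, Multiset.mem_map]
    rintro ⟨b, hb, rfl⟩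
    exact hi (hT b hb)

theorem filter_biUnion_attach_eq [DecidableEq β] {s : Finset γ} {P : Finset β} {f : β → γ}
    {g : (i : γ) → i ∈ s → Finset β} (hg : ∀ i hi, g i hi ⊆ {b ∈ P | f b = i}) {i : γ}
    (hi : i ∈ s) :
    {b ∈ s.attach.biUnion fun j => g j j.2 | f b = i} = g i hi := by
  ext b
  simp only [mem_filter, mem_biUnion, mem_attach, true_and, Subtype.exists]
  constructor
  · rintro ⟨⟨j, hj, hb⟩, rfl⟩
    obtain rfl : f b = j := (mem_filter.1 (hg j hj hb)).2
    exact hb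
  · exact fun hb => ⟨⟨i, hi, hb⟩, (mem_filter.1 (hg i hi hb)).2⟩

theorem card_filter_powerset_map_eq [DecidableEq β] (P : Finset β) (f : β → γ)
    (m : Multiset γ) :
    #{T ∈ P.powerset | T.val.map f = m} =
      ∏ i ∈ m.toFinset, (#{b ∈ P | f b = i}).choose (m.count i) := by
  simp_rw [← card_powersetCard, ← card_pi]
  refine card_bij' (fun T _ i _ => {b ∈ T | f b = i})
    (fun g _ => m.toFinset.attach.biUnion fun i => g i i.2) ?_ ?_ ?_ ?_
  · intro T hT
    simp only [mem_filter, mem_powerset, val_map_eq_iff] at hT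
    simp only [mem_pi, mem_powersetCard, Multiset.mem_toFinset]
    exact fun i hi => ⟨filter_subset_filter _ hT.1, hT.2.2 i hi⟩
  · intro g hg
    simp only [mem_pi, mem_powersetCard] at hg
    simp only [mem_filter, mem_powerset, val_map_eq_iff]
    have hfib : ∀ b ∈ m.toFinset.attach.biUnion (fun i => g i i.2), b ∈ P ∧ f b ∈ m := by
      intro b hb
      obtain ⟨⟨j, hj⟩, -, hb⟩ := mem_biUnion.1 hb
      obtain ⟨hbP, rfl⟩ := mem_filter.1 ((hg j hj).1 hb)
      exact ⟨hbP, Multiset.mem_toFinset.1 hj⟩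
    refine ⟨fun b hb => (hfib b hb).1, fun b hb => (hfib b hb).2, fun i hi => ?_⟩
    rw [filter_biUnion_attach_eq (fun i hi => (hg i hi).1) (Multiset.mem_toFinset.2 hi)]
    exact (hg i _).2
  · intro T hT
    simp only [mem_filter, mem_powerset, val_map_eq_iff] at hT
    ext b
    simp only [mem_biUnion, mem_attach, true_and, Subtype.exists, mem_filter,
      Multiset.mem_toFinset]
    exact ⟨fun ⟨_, _, hb, _⟩ => hb, fun hb => ⟨f b, hT.2.1 b hb, hb, rfl⟩⟩
  · intro g hg
    simp only [mem_pi, mem_powersetCard] at hg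
    funext i hi
    exact filter_biUnion_attach_eq (fun i hi => (hg i hi).1) hi

end Finset

theorem Nat.Partition.toFinset_parts_subset_Icc {k : ℕ} (μ : k.Partition) :
    μ.parts.toFinset ⊆ Icc 1 k := fun i hi => by
  rw [Multiset.mem_toFinset] at hi
  exact mem_Icc.2 ⟨μ.parts_pos hi, μ.le_of_mem_parts hi⟩

theorem cycleCount_eq_card_filter_parts {n i : ℕ} (σ : Equiv.Perm (Fin n)) (hi : 0 < i) :
    cycleCount n i σ = #{t ∈ σ.cyclePartition.parts | #t = i} := by
  simp_rw [cycleCount, ← σ.card_part_cyclePartition,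
    σ.cyclePartition.card_filter_card_part_eq, Nat.mul_div_cancel _ hi]

/-- The number of fixed points of `σ` acting on `k`-element subsets of `Fin n` equals
`Σ_μ Π_i C(X_i(σ), μ_i)`, the sum ranging over cycle types `μ` with `Σ i·μᵢ = k`
(i.e. over partitions of `k`, with `μᵢ` the number of parts equal to `i`). -/
theorem stmt_13 (n k : ℕ) (σ : Equiv.Perm (Fin n)) :
    (Finset.univ.filter fun S : Finset (Fin n) => S.card = k ∧ S.image σ = S).card
      = ∑ μ : Nat.Partition k,
          ∏ i ∈ Finset.Icc 1 k, (cycleCount n i σ).choose (μ.parts.count i) := by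
  have hinvariant : #{S : Finset (Fin n) | #S = k ∧ S.image σ = S} =
      #{T ∈ σ.cyclePartition.parts.powerset | ∑ t ∈ T, #t = k} := by
    rw [← Finpartition.card_filter_saturated, powerset_univ]
    congr 1
    ext S
    simp only [mem_filter, mem_univ, true_and, Equiv.Perm.image_eq_self_iff_part_subset]
  rw [hinvariant, card_filter_powerset_sum_eq _ _
    fun t ht => card_pos.2 (σ.cyclePartition.nonempty_of_mem_parts ht)]
  refine sum_congr rfl fun μ _ => ?_
  rw [card_filter_powerset_map_eq, prod_subset μ.toFinset_parts_subset_Icc fun i _ hi => by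
    rw [Multiset.count_eq_zero.2 (Multiset.mem_toFinset.not.1 hi), Nat.choose_zero_right]]
  exact prod_congr rfl fun i hi => by
    rw [cycleCount_eq_card_filter_parts σ (mem_Icc.1 hi).1]
end

section
/- Let c ≤ d ≤ e be natural numbers regarded as objects of FI (finite sets and injections), and V a representation of S_c over a field k. Then the map on coinvariants (Ind_c(V)_d)/S_d → (Ind_c(V)_e)/S_e induced by any injection Fin d → Fin e is an isomorphism, and both sides are naturally isomorphic to V/S_c. -/
/-!
Every generator `f ⊗ v` of `(Ind_c(V)_n)/S_n` is sent to `[v] ∈ V/S_c`; the `S_c`-relations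
go to `v - τ·v` and the `S_n`-relations to `0`. Conversely, once some `f₀ : Fin c ↪ Fin n`
exists, `S_n` acts transitively on injections, so `[f ⊗ v] = [f₀ ⊗ v]` and `[v] ↦ [f₀ ⊗ v]` is
an inverse. These identifications commute with postcomposition by `j`, which is therefore
bijective.
-/

open scoped TensorProduct

variable {k : Type} [Field k] {c : ℕ} {V : Type} [AddCommGroup V] [Module k V]

/-- `k[Inj(Fin c, Fin n)] ⊗_k V`, the ambient space of `Ind_c(V)_n`. -/
def bigSpace (k : Type) [Field k] (c : ℕ) (V : Type) [AddCommGroup V] [Module k V]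
    (n : ℕ) : Type :=
  ((Fin c ↪ Fin n) →₀ k) ⊗[k] V

noncomputable instance (n : ℕ) : AddCommGroup (bigSpace k c V n) :=
  inferInstanceAs (AddCommGroup (((Fin c ↪ Fin n) →₀ k) ⊗[k] V))

noncomputable instance (n : ℕ) : Module k (bigSpace k c V n) :=
  inferInstanceAs (Module k (((Fin c ↪ Fin n) →₀ k) ⊗[k] V))

/-- The relations defining `(Ind_c(V)_n)/S_n` inside `k[Inj(Fin c, Fin n)] ⊗_k V`:
the `⊗_{k[S_c]}`-relations `(f ∘ τ) ⊗ v - f ⊗ (τ·v)` together with the `S_n`-coinvariance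
relations `(σ ∘ f) ⊗ v - f ⊗ v`. -/
noncomputable def relSub (ρ : Representation k (Equiv.Perm (Fin c)) V) (n : ℕ) :
    Submodule k (bigSpace k c V n) :=
  Submodule.span k
    ({x | ∃ (f : Fin c ↪ Fin n) (τ : Equiv.Perm (Fin c)) (v : V),
        x = Finsupp.single (τ.toEmbedding.trans f) (1 : k) ⊗ₜ[k] v
              - Finsupp.single f (1 : k) ⊗ₜ[k] (ρ τ v)} ∪
     {x | ∃ (f : Fin c ↪ Fin n) (σ : Equiv.Perm (Fin n)) (v : V),
        x = Finsupp.single (f.trans σ.toEmbedding) (1 : k) ⊗ₜ[k] v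
              - Finsupp.single f (1 : k) ⊗ₜ[k] v})

/-- The map `k[Inj(Fin c, Fin d)] ⊗ V → k[Inj(Fin c, Fin e)] ⊗ V` induced by an
injection `j : Fin d ↪ Fin e` (postcomposition on injections). -/
noncomputable def baseMap (k : Type) [Field k] (c : ℕ) (V : Type) [AddCommGroup V]
    [Module k V] {d e : ℕ} (j : Fin d ↪ Fin e) :
    bigSpace k c V d →ₗ[k] bigSpace k c V e :=
  TensorProduct.map (Finsupp.lmapDomain k k (fun f : Fin c ↪ Fin d => f.trans j))
    LinearMap.id

/-- The span of `{v - τ·v}`; the coinvariants `V/S_c` are the quotient by it. -/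
def coinvSub (ρ : Representation k (Equiv.Perm (Fin c)) V) : Submodule k V :=
  Submodule.span k {x | ∃ (τ : Equiv.Perm (Fin c)) (v : V), x = v - ρ τ v}

section

variable (ρ : Representation k (Equiv.Perm (Fin c)) V)

lemma single_tmul_sub_single_tmul_mem_relSub {n : ℕ} (f g : Fin c ↪ Fin n) (v : V) :
    Finsupp.single f (1 : k) ⊗ₜ[k] v - Finsupp.single g 1 ⊗ₜ[k] v ∈ relSub ρ n := by
  obtain ⟨σ, hσ⟩ := Equiv.Perm.exists_extending_pair g f g.injective f.injective
  obtain rfl : g.trans σ.toEmbedding = f := DFunLike.ext _ _ hσ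
  exact Submodule.subset_span (Or.inr ⟨g, σ, v, rfl⟩)

lemma single_tmul_sub_mem_relSub {n : ℕ} (f : Fin c ↪ Fin n) (τ : Equiv.Perm (Fin c)) (v : V) :
    Finsupp.single f (1 : k) ⊗ₜ[k] (v - ρ τ v) ∈ relSub ρ n := by
  have hτ : Finsupp.single (τ.toEmbedding.trans f) (1 : k) ⊗ₜ[k] v
      - Finsupp.single f 1 ⊗ₜ[k] ρ τ v ∈ relSub ρ n :=
    Submodule.subset_span (Or.inl ⟨f, τ, v, rfl⟩)
  have hσ := single_tmul_sub_single_tmul_mem_relSub ρ (τ.toEmbedding.trans f) f v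
  -- `f ⊗ (v - τ·v) = ((f ∘ τ) ⊗ v - f ⊗ τ·v) - ((f ∘ τ) ⊗ v - f ⊗ v)`
  rw [TensorProduct.tmul_sub, ← sub_sub_sub_cancel_left _ _
    (Finsupp.single (τ.toEmbedding.trans f) (1 : k) ⊗ₜ[k] v)]
  exact sub_mem hτ hσ

lemma relSub_le_ker {n : ℕ} {M : Type*} [AddCommGroup M] [Module k M]
    (g : bigSpace k c V n →ₗ[k] M)
    (hτ : ∀ f τ v, g (Finsupp.single (τ.toEmbedding.trans f) (1 : k) ⊗ₜ[k] v) =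
      g (Finsupp.single f (1 : k) ⊗ₜ[k] ρ τ v))
    (hσ : ∀ (f : Fin c ↪ Fin n) (σ : Equiv.Perm (Fin n)) v,
      g (Finsupp.single (f.trans σ.toEmbedding) (1 : k) ⊗ₜ[k] v) =
        g (Finsupp.single f (1 : k) ⊗ₜ[k] v)) :
    relSub ρ n ≤ LinearMap.ker g := by
  refine Submodule.span_le.2 ?_
  rintro _ (⟨f, τ, v, rfl⟩ | ⟨f, σ, v, rfl⟩)
  · exact (map_sub g _ _).trans (sub_eq_zero.2 (hτ f τ v))
  · exact (map_sub g _ _).trans (sub_eq_zero.2 (hσ f σ v))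

lemma bigSpace_hom_ext {n : ℕ} {M : Type*} [AddCommGroup M] [Module k M]
    {φ ψ : bigSpace k c V n →ₗ[k] M}
    (h : ∀ f v, φ (Finsupp.single f (1 : k) ⊗ₜ[k] v) = ψ (Finsupp.single f (1 : k) ⊗ₜ[k] v)) :
    φ = ψ :=
  TensorProduct.ext <| Finsupp.lhom_ext' fun f => LinearMap.ext_ring <| LinearMap.ext (h f)

noncomputable def toCoinv (n : ℕ) : bigSpace k c V n →ₗ[k] V ⧸ coinvSub ρ :=
  TensorProduct.lift (Finsupp.linearCombination k fun _ => (coinvSub ρ).mkQ)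

lemma toCoinv_single_tmul {n : ℕ} (f : Fin c ↪ Fin n) (v : V) :
    toCoinv ρ n (Finsupp.single f (1 : k) ⊗ₜ[k] v) = Submodule.Quotient.mk v :=
  (TensorProduct.lift.tmul _ _).trans (by simp)

lemma relSub_le_ker_toCoinv (n : ℕ) : relSub ρ n ≤ LinearMap.ker (toCoinv ρ n) := by
  refine relSub_le_ker ρ _ (fun f τ v => ?_) fun f σ v => ?_ <;>
    simp only [toCoinv_single_tmul]
  exact (Submodule.Quotient.eq _).2 (Submodule.subset_span ⟨τ, v, rfl⟩)

noncomputable def relQuotToCoinv (n : ℕ) : (bigSpace k c V n ⧸ relSub ρ n) →ₗ[k] V ⧸ coinvSub ρ :=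
  (relSub ρ n).liftQ (toCoinv ρ n) (relSub_le_ker_toCoinv ρ n)

noncomputable def coinvToRelQuot {n : ℕ} (f₀ : Fin c ↪ Fin n) :
    (V ⧸ coinvSub ρ) →ₗ[k] bigSpace k c V n ⧸ relSub ρ n :=
  (coinvSub ρ).liftQ ((relSub ρ n).mkQ ∘ₗ TensorProduct.mk k _ V (Finsupp.single f₀ 1)) <|
    Submodule.span_le.2 <| by
      rintro _ ⟨τ, v, rfl⟩
      exact (Submodule.Quotient.mk_eq_zero _).2 (single_tmul_sub_mem_relSub ρ f₀ τ v)

noncomputable def relQuotEquivCoinv {n : ℕ} (f₀ : Fin c ↪ Fin n) :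
    (bigSpace k c V n ⧸ relSub ρ n) ≃ₗ[k] V ⧸ coinvSub ρ :=
  LinearEquiv.ofLinearMap (relQuotToCoinv ρ n) (coinvToRelQuot ρ f₀)
    (Submodule.linearMap_qext _ <| LinearMap.ext fun v => toCoinv_single_tmul ρ f₀ v)
    (Submodule.linearMap_qext _ <| bigSpace_hom_ext fun f v =>
      (congrArg (coinvToRelQuot ρ f₀) (toCoinv_single_tmul ρ f v)).trans <|
        (Submodule.Quotient.eq _).2 (single_tmul_sub_single_tmul_mem_relSub ρ f₀ f v))

lemma relQuotToCoinv_bijective {n : ℕ} (f₀ : Fin c ↪ Fin n) :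
    Function.Bijective (relQuotToCoinv ρ n) :=
  (relQuotEquivCoinv ρ f₀).bijective

lemma baseMap_single_tmul {d e : ℕ} (j : Fin d ↪ Fin e) (f : Fin c ↪ Fin d) (v : V) :
    baseMap k c V j (Finsupp.single f (1 : k) ⊗ₜ[k] v) = Finsupp.single (f.trans j) 1 ⊗ₜ[k] v :=
  (TensorProduct.map_tmul _ _ _ _).trans (by simp)

lemma toCoinv_comp_baseMap {d e : ℕ} (j : Fin d ↪ Fin e) :
    toCoinv ρ e ∘ₗ baseMap k c V j = toCoinv ρ d :=
  bigSpace_hom_ext fun f v => (congrArg (toCoinv ρ e) (baseMap_single_tmul j f v)).trans <|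
    (toCoinv_single_tmul ρ _ v).trans (toCoinv_single_tmul ρ f v).symm

lemma relSub_le_comap_baseMap {d e : ℕ} (j : Fin d ↪ Fin e) :
    relSub ρ d ≤ (relSub ρ e).comap (baseMap k c V j) := by
  rw [← Submodule.ker_mkQ (relSub ρ e), ← LinearMap.ker_comp]
  refine relSub_le_ker ρ _ (fun f τ v => ?_) fun f σ v => ?_ <;>
    change Submodule.Quotient.mk (baseMap k c V j _) = Submodule.Quotient.mk (baseMap k c V j _) <;>
    rw [baseMap_single_tmul, baseMap_single_tmul] <;>
    refine (Submodule.Quotient.eq _).2 ?_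
  · exact Submodule.subset_span (Or.inl ⟨f.trans j, τ, v, rfl⟩)
  · exact single_tmul_sub_single_tmul_mem_relSub ρ _ _ v

noncomputable def relQuotMap {d e : ℕ} (j : Fin d ↪ Fin e) :
    (bigSpace k c V d ⧸ relSub ρ d) →ₗ[k] bigSpace k c V e ⧸ relSub ρ e :=
  (relSub ρ d).mapQ (relSub ρ e) (baseMap k c V j) (relSub_le_comap_baseMap ρ j)

lemma relQuotToCoinv_comp_relQuotMap {d e : ℕ} (j : Fin d ↪ Fin e) :
    relQuotToCoinv ρ e ∘ₗ relQuotMap ρ j = relQuotToCoinv ρ d := by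
  refine Submodule.linearMap_qext _ ?_
  rw [LinearMap.comp_assoc, relQuotMap, Submodule.mapQ_mkQ, ← LinearMap.comp_assoc,
    relQuotToCoinv, relQuotToCoinv, Submodule.liftQ_mkQ, Submodule.liftQ_mkQ, toCoinv_comp_baseMap]

end

theorem stmt_19_general (ρ : Representation k (Equiv.Perm (Fin c)) V) {d e : ℕ}
    (hcd : c ≤ d) (j : Fin d ↪ Fin e) :
    (∃ φ : (bigSpace k c V d ⧸ relSub ρ d) →ₗ[k] (bigSpace k c V e ⧸ relSub ρ e),
      φ.comp (relSub ρ d).mkQ = ((relSub ρ e).mkQ).comp (baseMap k c V j) ∧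
      Function.Bijective φ ∧
      ∀ φ' : (bigSpace k c V d ⧸ relSub ρ d) →ₗ[k] (bigSpace k c V e ⧸ relSub ρ e),
        φ'.comp (relSub ρ d).mkQ = ((relSub ρ e).mkQ).comp (baseMap k c V j) → φ' = φ) ∧
    Nonempty ((bigSpace k c V d ⧸ relSub ρ d) ≃ₗ[k] (V ⧸ coinvSub ρ)) ∧
    Nonempty ((bigSpace k c V e ⧸ relSub ρ e) ≃ₗ[k] (V ⧸ coinvSub ρ)) := by
  let f₀ : Fin c ↪ Fin d := Fin.castLEEmb hcd
  have hφ : relQuotMap ρ j ∘ₗ (relSub ρ d).mkQ = (relSub ρ e).mkQ ∘ₗ baseMap k c V j :=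
    Submodule.mapQ_mkQ _ _ _
  have hbij : Function.Bijective (relQuotMap ρ j) := by
    refine (Function.Bijective.of_comp_iff' (relQuotToCoinv_bijective ρ (f₀.trans j)) _).1 ?_
    rw [← LinearMap.coe_comp, relQuotToCoinv_comp_relQuotMap]
    exact relQuotToCoinv_bijective ρ f₀
  exact ⟨⟨relQuotMap ρ j, hφ, hbij, fun φ' h' => Submodule.linearMap_qext _ (h'.trans hφ.symm)⟩,
    ⟨relQuotEquivCoinv ρ f₀⟩, ⟨relQuotEquivCoinv ρ (f₀.trans j)⟩⟩

/-- Let `c ≤ d ≤ e` be objects of `FI` and `V` a representation of `S_c` over a field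
`k`, with `Ind_c(V)_n := k[Inj(Fin c, Fin n)] ⊗_{k[S_c]} V`.  The map on coinvariants
`(Ind_c(V)_d)/S_d → (Ind_c(V)_e)/S_e` induced by any injection `Fin d ↪ Fin e` is a
(unique) well-defined isomorphism, and both sides are isomorphic to `V/S_c`. -/
theorem stmt_19 (ρ : Representation k (Equiv.Perm (Fin c)) V) {d e : ℕ}
    (hcd : c ≤ d) (hde : d ≤ e) (j : Fin d ↪ Fin e) :
    (∃ φ : (bigSpace k c V d ⧸ relSub ρ d) →ₗ[k] (bigSpace k c V e ⧸ relSub ρ e),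
      φ.comp (relSub ρ d).mkQ = ((relSub ρ e).mkQ).comp (baseMap k c V j) ∧
      Function.Bijective φ ∧
      ∀ φ' : (bigSpace k c V d ⧸ relSub ρ d) →ₗ[k] (bigSpace k c V e ⧸ relSub ρ e),
        φ'.comp (relSub ρ d).mkQ = ((relSub ρ e).mkQ).comp (baseMap k c V j) → φ' = φ) ∧
    Nonempty ((bigSpace k c V d ⧸ relSub ρ d) ≃ₗ[k] (V ⧸ coinvSub ρ)) ∧
    Nonempty ((bigSpace k c V e ⧸ relSub ρ e) ≃ₗ[k] (V ⧸ coinvSub ρ)) :=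
  stmt_19_general ρ hcd j
end
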